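/- arXiv:2504.02449 — 6 statements merged into one kernel-verified Lean document; each statement's English description precedes it below -/
import Mathlib

section
/- Let Y = {y₁,y₂} be a handle of a segment S on 12 vertices coming from a good cubic graph on 14 vertices. The core of S with respect to Y (vertices of S outside both handles and not adjacent to Y) has exactly 6 vertices if y₁ ∼ y₂, and exactly 4 vertices if y₁ ≁ y₂. -/
/-!
Let `N₁, N₂` be the neighbourhoods of `y₁, y₂`. Goodness forces `y` to be the only common
neighbour of `y₁` and `y₂`, so `N₁ ∪ N₂` has `3 + 3 - 1 = 5` vertices, and it also forbids edges
between the two handles. Hence the only vertices of `{y, z, y₁, y₂, z₁, z₂}` lying in `N₁ ∪ N₂`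
are `y`, together with `y₁, y₂` when they are adjacent. The core is the complement, among the
14 vertices, of the union of these two sets, which has `6 + 5 - 3 = 8` vertices if `y₁ ∼ y₂`
and `6 + 5 - 1 = 10` otherwise.
-/

open Finset

namespace SimpleGraph

variable {V : Type*} [DecidableEq V] (G : SimpleGraph V)

def IsGood [G.LocallyFinite] : Prop :=
  ∀ a b, a ≠ b → ¬ G.Adj a b → #(G.neighborFinset a ∩ G.neighborFinset b) ≤ 1

variable {G} [G.LocallyFinite]

theorem neighborFinset_eq_of_adj {y a b c : V} (hdeg : G.degree y = 3) (hab : a ≠ b)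
    (hac : a ≠ c) (hbc : b ≠ c) (ha : G.Adj y a) (hb : G.Adj y b) (hc : G.Adj y c) :
    G.neighborFinset y = {a, b, c} := by
  refine (eq_of_subset_of_card_le ?_ ?_).symm
  · simp [insert_subset_iff, ha, hb, hc]
  · simp [hab, hac, hbc, card_neighborFinset_eq_degree, hdeg]

theorem card_neighborFinset_union_add_one {a b v : V}
    (h : G.neighborFinset a ∩ G.neighborFinset b = {v}) :
    #(G.neighborFinset a ∪ G.neighborFinset b) + 1 = G.degree a + G.degree b := by
  rw [← card_neighborFinset_eq_degree, ← card_neighborFinset_eq_degree,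
    ← card_union_add_card_inter, h, card_singleton]

theorem card_filter_not_adj_add [Fintype V] [DecidableRel G.Adj] (A : Finset V) (a b : V) :
    #{w | w ∉ A ∧ ¬ G.Adj a w ∧ ¬ G.Adj b w} + #{w ∈ A | ¬ G.Adj a w ∧ ¬ G.Adj b w}
      + #(G.neighborFinset a ∪ G.neighborFinset b) = Fintype.card V := by
  have hcompl : ({w | w ∉ A ∧ ¬ G.Adj a w ∧ ¬ G.Adj b w} : Finset V)
      = (A ∪ (G.neighborFinset a ∪ G.neighborFinset b))ᶜ := by
    ext w; simp
  have hsdiff : ({w ∈ A | ¬ G.Adj a w ∧ ¬ G.Adj b w} : Finset V)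
      = A \ (G.neighborFinset a ∪ G.neighborFinset b) := by
    ext w; simp
  rw [hcompl, hsdiff, add_assoc, card_sdiff_add_card, card_compl_add_card]

theorem IsGood.adj_of_two_common_neighbors (hG : G.IsGood) {a b u v : V} (hab : a ≠ b)
    (huv : u ≠ v) (hau : G.Adj a u) (hbu : G.Adj b u) (hav : G.Adj a v) (hbv : G.Adj b v) :
    G.Adj a b := by
  by_contra hnab
  have hsub : {u, v} ⊆ G.neighborFinset a ∩ G.neighborFinset b := by
    simp [insert_subset_iff, hau, hbu, hav, hbv]
  have := (card_le_card hsub).trans (hG a b hab hnab)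
  simp [card_pair huv] at this

theorem IsGood.neighborFinset_inter_eq_singleton (hG : G.IsGood) {y z y₁ y₂ : V}
    (hNy : G.neighborFinset y = {z, y₁, y₂}) (hy₁z : ¬ G.Adj y₁ z) (hy12 : y₁ ≠ y₂) :
    G.neighborFinset y₁ ∩ G.neighborFinset y₂ = {y} := by
  have hy₁ : G.Adj y y₁ := by simp [← mem_neighborFinset, hNy]
  have hy₂ : G.Adj y y₂ := by simp [← mem_neighborFinset, hNy]
  ext w
  simp only [mem_inter, mem_neighborFinset, mem_singleton]
  refine ⟨fun ⟨hw₁, hw₂⟩ => ?_, by rintro rfl; exact ⟨hy₁.symm, hy₂.symm⟩⟩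
  by_contra hwy
  have hyw : w ∈ G.neighborFinset y :=
    (mem_neighborFinset ..).2 <|
      hG.adj_of_two_common_neighbors (Ne.symm hwy) hy12 hy₁ hw₁.symm hy₂ hw₂.symm
  rw [hNy] at hyw
  rcases mem_insert.1 hyw with rfl | hw
  · exact hy₁z hw₁
  rcases mem_insert.1 hw with rfl | hw
  · exact G.irrefl hw₁
  rw [mem_singleton.1 hw] at hw₂
  exact G.irrefl hw₂

theorem IsGood.not_adj_handles (hG : G.IsGood) {y z u w : V} (hyz : G.Adj y z)
    (htri : ∀ x, ¬ (G.Adj y x ∧ G.Adj z x)) (hyu : G.Adj y u) (huz : u ≠ z) (hzw : G.Adj z w)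
    (hwy : w ≠ y) : ¬ G.Adj u w := fun huw =>
  htri u ⟨hyu,
    (hG.adj_of_two_common_neighbors huz (Ne.symm hwy) hyu.symm hyz.symm huw hzw).symm⟩

theorem IsGood.card_filter_not_adj_handles [DecidableRel G.Adj] (hG : G.IsGood)
    {y z y₁ y₂ z₁ z₂ : V} (hyz : G.Adj y z) (htri : ∀ w, ¬ (G.Adj y w ∧ G.Adj z w))
    (hy₁ : G.Adj y y₁) (hy₂ : G.Adj y y₂) (hy12 : y₁ ≠ y₂) (hy₁z : y₁ ≠ z) (hy₂z : y₂ ≠ z)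
    (hz₁ : G.Adj z z₁) (hz₂ : G.Adj z z₂) (hz12 : z₁ ≠ z₂) (hz₁y : z₁ ≠ y) (hz₂y : z₂ ≠ y) :
    #{w ∈ ({y, z, y₁, y₂, z₁, z₂} : Finset V) | ¬ G.Adj y₁ w ∧ ¬ G.Adj y₂ w}
      = if G.Adj y₁ y₂ then 3 else 5 := by
  have hyz' : ¬ G.Adj y₁ z ∧ ¬ G.Adj y₂ z :=
    ⟨fun h => htri y₁ ⟨hy₁, h.symm⟩, fun h => htri y₂ ⟨hy₂, h.symm⟩⟩
  have hcross : ¬ G.Adj y₁ z₁ ∧ ¬ G.Adj y₁ z₂ ∧ ¬ G.Adj y₂ z₁ ∧ ¬ G.Adj y₂ z₂ := by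
    refine ⟨?_, ?_, ?_, ?_⟩ <;> apply hG.not_adj_handles hyz htri <;> assumption
  have hne : y₁ ≠ z₁ ∧ y₁ ≠ z₂ ∧ y₂ ≠ z₁ ∧ y₂ ≠ z₂ :=
    ⟨fun h => htri y₁ ⟨hy₁, h ▸ hz₁⟩, fun h => htri y₁ ⟨hy₁, h ▸ hz₂⟩,
      fun h => htri y₂ ⟨hy₂, h ▸ hz₁⟩, fun h => htri y₂ ⟨hy₂, h ▸ hz₂⟩⟩
  split_ifs with hadj
  · simp [filter_insert, filter_singleton, hadj, hadj.symm, hy₁.symm, hy₂.symm, hyz', hcross,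
      hz₁.ne, hz₂.ne, hz12]
  · have hadj' : ¬ G.Adj y₂ y₁ := fun h => hadj h.symm
    simp [filter_insert, filter_singleton, hadj, hadj', hy₁.symm, hy₂.symm, hyz', hcross, hne,
      hz₁.ne, hz₂.ne, hz12, hy12, hy₁z.symm, hy₂z.symm]

end SimpleGraph

open SimpleGraph

/-- Let `Y = {y₁,y₂}` be a handle of the segment `S` (on 12 vertices) obtained from a
good cubic graph `H` on 14 vertices by removing an edge `yz` not contained in a triangle.
The core of `S` with respect to `Y` (the vertices of `S` outside both handles that are
not adjacent to `Y`) has exactly 6 vertices if `y₁ ∼ y₂` and exactly 4 vertices if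
`y₁ ≁ y₂`. -/
theorem stmt12 {V : Type} [Fintype V] [DecidableEq V] (H : SimpleGraph V) [DecidableRel H.Adj]
    (hcard : Fintype.card V = 14)
    (hcubic : ∀ w : V, H.degree w = 3)
    (hgood : ∀ a b : V, a ≠ b → ¬ H.Adj a b →
      (H.neighborFinset a ∩ H.neighborFinset b).card ≤ 1)
    (y z : V) (hyz : H.Adj y z) (htri : ∀ w : V, ¬ (H.Adj y w ∧ H.Adj z w))
    (y₁ y₂ z₁ z₂ : V)
    (hy₁ : H.Adj y y₁) (hy₂ : H.Adj y y₂) (hy12 : y₁ ≠ y₂) (hy₁z : y₁ ≠ z) (hy₂z : y₂ ≠ z)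
    (hz₁ : H.Adj z z₁) (hz₂ : H.Adj z z₂) (hz12 : z₁ ≠ z₂) (hz₁y : z₁ ≠ y) (hz₂y : z₂ ≠ y) :
    let core : Finset V := Finset.univ.filter (fun w =>
      w ∉ ({y, z, y₁, y₂, z₁, z₂} : Finset V) ∧ ¬ H.Adj y₁ w ∧ ¬ H.Adj y₂ w)
    (H.Adj y₁ y₂ → core.card = 6) ∧ (¬ H.Adj y₁ y₂ → core.card = 4) := by
  intro core
  have hG : H.IsGood := hgood
  have hNy := neighborFinset_eq_of_adj (hcubic y) (Ne.symm hy₁z) (Ne.symm hy₂z) hy12 hyz hy₁ hy₂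
  have hunion := card_neighborFinset_union_add_one <|
    hG.neighborFinset_inter_eq_singleton hNy (fun h => htri y₁ ⟨hy₁, h.symm⟩) hy12
  rw [hcubic, hcubic] at hunion
  have hcount : #core + _ + _ = _ :=
    card_filter_not_adj_add (G := H) {y, z, y₁, y₂, z₁, z₂} y₁ y₂
  rw [hG.card_filter_not_adj_handles hyz htri hy₁ hy₂ hy12 hy₁z hy₂z hz₁ hz₂ hz12 hz₁y hz₂y]
    at hcount
  refine ⟨fun hadj => ?_, fun hadj => ?_⟩
  · rw [if_pos hadj] at hcount; omega
  · rw [if_neg hadj] at hcount; omega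
end

section
/- Let G = srg(85,14,3,2), Q = {x,y,z} a maximal 3-clique, S_x = G₁(x)\Q, S_y = G₁(y)\Q, Z = S_x ∩ S_y, and let C_x ⊆ S_x, C_y ⊆ S_y be the cores with respect to Z. Then every edge of G between S_x\S_y and S_y\S_x joins a vertex of C_x to a vertex of C_y, and these edges form a perfect matching between C_x and C_y. -/
/-!
A vertex `u ∈ S_x \ S_y` is not adjacent to `y`, so by `μ = 2` it has exactly two common
neighbours with `y`: the vertex `x` and one more vertex `v`, which is then a neighbour of `u`
in `S_y`. An edge `uv` between `S_x \ S_y` and `S_y \ S_x` therefore uses up both common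
neighbours of `u` and `y` (namely `x` and `v`), so `u` sees neither `z` nor any vertex of
`Z = S_x ∩ S_y`, i.e. `u` lies in the core `C_x`; symmetrically `v ∈ C_y`. Conversely each
`u ∈ C_x` has exactly one neighbour in `C_y`, namely the second common neighbour of `u` and `y`.
-/

namespace SimpleGraph

variable {V : Type} [Fintype V] {G : SimpleGraph V} [DecidableRel G.Adj] {n k ℓ : ℕ}

theorem IsSRGWith.exists_ne_mem_commonNeighbors (h : G.IsSRGWith n k ℓ 2) {a b : V}
    (hab : a ≠ b) (hn : ¬G.Adj a b) (p : V) :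
    ∃ q ∈ G.commonNeighbors a b, q ≠ p := by
  classical
  have hcard : 1 < (G.commonNeighbors a b).toFinset.card := by
    rw [Set.toFinset_card, h.of_not_adj hab hn]
    norm_num
  obtain ⟨q, hq, hqp⟩ := Finset.exists_mem_ne hcard p
  exact ⟨q, Set.mem_toFinset.1 hq, hqp⟩

theorem IsSRGWith.eq_or_eq_of_mem_commonNeighbors (h : G.IsSRGWith n k ℓ 2) {a b p q r : V}
    (hab : a ≠ b) (hn : ¬G.Adj a b) (hp : p ∈ G.commonNeighbors a b)
    (hq : q ∈ G.commonNeighbors a b) (hpq : p ≠ q) (hr : r ∈ G.commonNeighbors a b) :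
    r = p ∨ r = q := by
  classical
  by_contra! hne
  have hsub : ({p, q, r} : Finset V) ⊆ (G.commonNeighbors a b).toFinset := by
    simp only [Finset.insert_subset_iff, Finset.singleton_subset_iff, Set.mem_toFinset]
    exact ⟨hp, hq, hr⟩
  have hle := Finset.card_le_card hsub
  rw [Set.toFinset_card, h.of_not_adj hab hn,
    Finset.card_eq_three.2 ⟨p, q, r, hpq, hne.1.symm, hne.2.symm, rfl⟩] at hle
  omega

/-- `u` lies in the core of `S_x = G₁(x) \ {x, y, z}` with respect to the handle
`Z = S_x ∩ S_y`. -/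
structure IsCoreVertex (G : SimpleGraph V) (x y z u : V) : Prop where
  adj_left : G.Adj x u
  not_adj_right : ¬G.Adj y u
  not_adj_third : ¬G.Adj z u
  ne_right : u ≠ y
  ne_third : u ≠ z
  not_adj_handle : ∀ w, G.Adj x w → G.Adj y w → ¬G.Adj u w

theorem mem_core_iff_isCoreVertex [DecidableEq V] {x y z u : V}
    {Q H : Finset V} (hQ : ∀ w, w ∈ Q ↔ w = x ∨ w = y ∨ w = z)
    (hH : ∀ w, w ∈ H ↔ (G.Adj x w ∧ w ∉ Q) ∧ G.Adj y w ∧ w ∉ Q) :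
    u ∈ ((G.neighborFinset x \ Q) \
        (H ∪ ((G.neighborFinset x \ Q) ∩ (G.neighborFinset z \ Q)))).filter
        (fun u => ∀ w ∈ H, ¬G.Adj u w) ↔ G.IsCoreVertex x y z u := by
  simp only [Finset.mem_filter, Finset.mem_sdiff, Finset.mem_union, Finset.mem_inter,
    mem_neighborFinset, hH, hQ]
  constructor
  · rintro ⟨⟨⟨hxu, hu⟩, hnot⟩, hfil⟩
    have hnzu : ¬G.Adj z u := fun hzu => hnot (Or.inr ⟨⟨hxu, hu⟩, hzu, hu⟩)
    refine ⟨hxu, fun hyu => hnot (Or.inl ⟨⟨hxu, hu⟩, hyu, hu⟩), hnzu, by tauto, by tauto,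
      fun w hxw hyw huw => ?_⟩
    obtain rfl | hwz := eq_or_ne w z
    · exact hnzu huw.symm
    · have hwQ : ¬(w = x ∨ w = y ∨ w = z) := by
        rintro (rfl | rfl | rfl)
        exacts [G.irrefl hxw, G.irrefl hyw, hwz rfl]
      exact hfil w ⟨⟨hxw, hwQ⟩, hyw, hwQ⟩ huw
  · rintro ⟨hxu, hnyu, hnzu, huy, huz, hfil⟩
    have hu : ¬(u = x ∨ u = y ∨ u = z) := by
      rintro (rfl | rfl | rfl)
      exacts [G.irrefl hxu, huy rfl, huz rfl]
    exact ⟨⟨⟨hxu, hu⟩, by tauto⟩, fun w hw => hfil w hw.1.1 hw.2.1⟩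

theorem IsSRGWith.isCoreVertex_of_adj (h : G.IsSRGWith n k ℓ 2) {x y z u v : V}
    (hxy : G.Adj x y) (hxz : G.Adj x z) (hyz : G.Adj y z) (hxu : G.Adj x u) (hyu : ¬G.Adj y u)
    (huy : u ≠ y) (huz : u ≠ z) (hyv : G.Adj y v) (hxv : ¬G.Adj x v) (hvx : v ≠ x) (huv : G.Adj u v) :
    G.IsCoreVertex x y z u := by
  have hnuy : ¬G.Adj u y := fun h' => hyu h'.symm
  have hx : x ∈ G.commonNeighbors u y := ⟨hxu.symm, hxy.symm⟩
  have hv : v ∈ G.commonNeighbors u y := ⟨huv, hyv⟩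
  refine ⟨hxu, hyu, fun hzu => ?_, huy, huz, fun w hxw hyw huw => ?_⟩
  · rcases h.eq_or_eq_of_mem_commonNeighbors huy hnuy hx hv hvx.symm ⟨hzu.symm, hyz⟩
      with rfl | rfl
    exacts [G.irrefl hxz, hxv hxz]
  · rcases h.eq_or_eq_of_mem_commonNeighbors huy hnuy hx hv hvx.symm ⟨huw, hyw⟩ with rfl | rfl
    exacts [G.irrefl hxw, hxv hxw]

theorem IsSRGWith.existsUnique_adj_isCoreVertex (h : G.IsSRGWith n k ℓ 2) {x y z u : V}
    (hxy : G.Adj x y) (hxz : G.Adj x z) (hyz : G.Adj y z) (hu : G.IsCoreVertex x y z u) :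
    ∃! v, G.IsCoreVertex y x z v ∧ G.Adj u v := by
  have hnuy : ¬G.Adj u y := fun h' => hu.not_adj_right h'.symm
  have hx : x ∈ G.commonNeighbors u y := ⟨hu.adj_left.symm, hxy.symm⟩
  obtain ⟨v, ⟨huv, hyv⟩, hvx⟩ := h.exists_ne_mem_commonNeighbors hu.ne_right hnuy x
  have hxv : ¬G.Adj x v := fun hxv => hu.not_adj_handle v hxv hyv huv
  have hvz : v ≠ z := by
    rintro rfl
    exact hu.not_adj_third huv.symm
  refine ⟨v, ⟨h.isCoreVertex_of_adj hxy.symm hyz hxz hyv hxv hvx hvz hu.adj_left hu.not_adj_right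
    hu.ne_right huv.symm, huv⟩, fun v' ⟨hv', huv'⟩ => ?_⟩
  rcases h.eq_or_eq_of_mem_commonNeighbors hu.ne_right hnuy hx ⟨huv, hyv⟩ hvx.symm
    ⟨huv', hv'.adj_left⟩ with rfl | rfl
  exacts [absurd rfl hv'.ne_right, rfl]

end SimpleGraph

theorem stmt13_general {V : Type} [Fintype V] [DecidableEq V] (G : SimpleGraph V) [DecidableRel G.Adj]
    (h : G.IsSRGWith 85 14 3 2)
    (x y z : V) (hxy : G.Adj x y) (hxz : G.Adj x z) (hyz : G.Adj y z) :
    let Q : Finset V := {x, y, z}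
    let Sx := G.neighborFinset x \ Q
    let Sy := G.neighborFinset y \ Q
    let Sz := G.neighborFinset z \ Q
    let Zh := Sx ∩ Sy
    let Yh := Sx ∩ Sz
    let Xh := Sy ∩ Sz
    let Cx := (Sx \ (Zh ∪ Yh)).filter (fun u => ∀ w ∈ Zh, ¬ G.Adj u w)
    let Cy := (Sy \ (Zh ∪ Xh)).filter (fun u => ∀ w ∈ Zh, ¬ G.Adj u w)
    (∀ u ∈ Sx \ Sy, ∀ v ∈ Sy \ Sx, G.Adj u v → u ∈ Cx ∧ v ∈ Cy) ∧
    (∀ u ∈ Cx, ∃! v : V, v ∈ Cy ∧ G.Adj u v) ∧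
    (∀ v ∈ Cy, ∃! u : V, u ∈ Cx ∧ G.Adj u v) := by
  intro Q Sx Sy Sz Zh Yh Xh Cx Cy
  have hZ : ∀ w, w ∈ Zh ↔ (G.Adj x w ∧ w ∉ Q) ∧ G.Adj y w ∧ w ∉ Q := by
    simp [Zh, Sx, Sy]
  have hCx : ∀ u, u ∈ Cx ↔ G.IsCoreVertex x y z u :=
    fun u => SimpleGraph.mem_core_iff_isCoreVertex (by simp [Q]) hZ
  have hCy : ∀ v, v ∈ Cy ↔ G.IsCoreVertex y x z v :=
    fun v => SimpleGraph.mem_core_iff_isCoreVertex (by simp only [Q, Finset.mem_insert, Finset.mem_singleton]; tauto) (by simp only [hZ]; tauto)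
  refine ⟨fun u hu v hv huv => ?_, fun u hu => ?_, fun v hv => ?_⟩
  · simp only [Sx, Sy, Q, Finset.mem_sdiff, SimpleGraph.mem_neighborFinset, Finset.mem_insert,
      Finset.mem_singleton, not_or] at hu hv
    obtain ⟨⟨hxu, hux, huy, huz⟩, hu⟩ := hu
    obtain ⟨⟨hyv, hvx, hvy, hvz⟩, hv⟩ := hv
    have hyu : ¬G.Adj y u := fun hyu => hu ⟨hyu, hux, huy, huz⟩
    have hxv : ¬G.Adj x v := fun hxv => hv ⟨hxv, hvx, hvy, hvz⟩
    rw [hCx, hCy]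
    exact ⟨h.isCoreVertex_of_adj hxy hxz hyz hxu hyu huy huz hyv hxv hvx huv,
      h.isCoreVertex_of_adj hxy.symm hyz hxz hyv hxv hvx hvz hxu hyu huy huv.symm⟩
  · simpa only [hCx, hCy] using h.existsUnique_adj_isCoreVertex hxy hxz hyz ((hCx u).1 hu)
  · simpa only [hCx, hCy, G.adj_comm v] using
      h.existsUnique_adj_isCoreVertex hxy.symm hyz hxz ((hCy v).1 hv)

/-- Let `G = srg(85,14,3,2)`, `Q = {x,y,z}` a maximal 3-clique, `S_x = G₁(x)\Q`,
`S_y = G₁(y)\Q`, `Z = S_x ∩ S_y`, and let `C_x ⊆ S_x`, `C_y ⊆ S_y` be the cores with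
respect to `Z` (vertices outside both handles with no neighbour in `Z`). Then every edge
of `G` between `S_x\S_y` and `S_y\S_x` joins a vertex of `C_x` to a vertex of `C_y`, and
these edges form a perfect matching between `C_x` and `C_y`. -/
theorem stmt13 {V : Type} [Fintype V] [DecidableEq V] (G : SimpleGraph V) [DecidableRel G.Adj]
    (h : G.IsSRGWith 85 14 3 2) (hc : G.Connected)
    (x y z : V) (hxy : G.Adj x y) (hxz : G.Adj x z) (hyz : G.Adj y z)
    (hmax : ∀ w : V, ¬ (G.Adj x w ∧ G.Adj y w ∧ G.Adj z w)) :
    let Q : Finset V := {x, y, z}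
    let Sx := G.neighborFinset x \ Q
    let Sy := G.neighborFinset y \ Q
    let Sz := G.neighborFinset z \ Q
    let Zh := Sx ∩ Sy
    let Yh := Sx ∩ Sz
    let Xh := Sy ∩ Sz
    let Cx := (Sx \ (Zh ∪ Yh)).filter (fun u => ∀ w ∈ Zh, ¬ G.Adj u w)
    let Cy := (Sy \ (Zh ∪ Xh)).filter (fun u => ∀ w ∈ Zh, ¬ G.Adj u w)
    (∀ u ∈ Sx \ Sy, ∀ v ∈ Sy \ Sx, G.Adj u v → u ∈ Cx ∧ v ∈ Cy) ∧
    (∀ u ∈ Cx, ∃! v : V, v ∈ Cy ∧ G.Adj u v) ∧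
    (∀ v ∈ Cy, ∃! u : V, u ∈ Cx ∧ G.Adj u v) :=
  stmt13_general G h x y z hxy hxz hyz
end

section
/- Let G = srg(85,14,3,2) with maximal 3-clique Q = {x,y,z}, T = S_x∪S_y∪S_z, and suppose u, u′ are two vertices outside Q∪T both adjacent to the same vertex t ∈ S_y∩S_z. If u and u′ have the same set of neighbours in T, then u = u′. -/
/-!
Suppose `u ≠ u'`. The two common neighbours `a, b` of `u` and `x` lie in `T`, so together with
`t` they are three common neighbours of `u` and `u'`; as `μ = 2`, `u` and `u'` are adjacent, and
as `λ = 3`, `a, b, t` are all of their common neighbours. The second common neighbour `s ≠ t` of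
`u` and `y` also lies in `T`, hence is a common neighbour of `u, u'`, so `s ∈ {a, b}` is adjacent
to `x`. The non-adjacent pair `s, t` would share `y, u, u'`, so `s ~ t`; but then the pair `x, t`
shares `y, z, s`, forcing `x ~ t` and contradicting the maximality of `{x, y, z}`.
-/

namespace SimpleGraph

variable {V : Type} [Fintype V] {G : SimpleGraph V} [DecidableRel G.Adj]

theorem card_le_card_commonNeighbors {v w : V} (s : Finset V)
    (hs : ∀ a ∈ s, G.Adj v a ∧ G.Adj w a) : s.card ≤ Fintype.card (G.commonNeighbors v w) := by
  rw [← Set.toFinset_card]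
  exact Finset.card_le_card fun a ha => Set.mem_toFinset.2 (hs a ha)

variable [DecidableEq V]

theorem mem_neighborFinset_sdiff {Q : Finset V} {q u w : V} (hqw : G.Adj q w) (huw : G.Adj u w)
    (hu : ∀ p ∈ Q, ¬G.Adj p u) : w ∈ G.neighborFinset q \ Q :=
  Finset.mem_sdiff.2 ⟨(G.mem_neighborFinset q w).2 hqw, fun hw => hu w hw huw.symm⟩

namespace IsSRGWith

variable {n k ℓ μ : ℕ} {v w : V}

theorem exists_commonNeighbor_ne (h : G.IsSRGWith n k ℓ μ) (hμ : 2 ≤ μ) (hvw : v ≠ w)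
    (hadj : ¬G.Adj v w) (t : V) : ∃ s, s ≠ t ∧ G.Adj v s ∧ G.Adj w s := by
  by_contra! hsub
  have hle : Fintype.card (G.commonNeighbors v w) ≤ 1 := by
    rw [← Set.toFinset_card]
    refine Finset.card_le_one.2 fun a ha b hb => ?_
    simp only [Set.mem_toFinset, mem_commonNeighbors] at ha hb
    by_contra hab
    exact hab ((not_ne_iff.1 fun hat => hsub a hat ha.1 ha.2).trans
      (not_ne_iff.1 fun hbt => hsub b hbt hb.1 hb.2).symm)
  have := h.of_not_adj hvw hadj
  omega

theorem adj_of_three_commonNeighbors (h : G.IsSRGWith n k ℓ μ) (hμ : μ < 3) (hvw : v ≠ w)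
    {a b c : V} (hab : a ≠ b) (hac : a ≠ c) (hbc : b ≠ c) (ha : G.Adj v a ∧ G.Adj w a)
    (hb : G.Adj v b ∧ G.Adj w b) (hc : G.Adj v c ∧ G.Adj w c) : G.Adj v w := by
  by_contra hadj
  have := card_le_card_commonNeighbors {a, b, c} <| by
    simp only [Finset.mem_insert, Finset.mem_singleton]
    rintro _ (rfl | rfl | rfl) <;> assumption
  rw [Finset.card_eq_three.2 ⟨a, b, c, hab, hac, hbc, rfl⟩, h.of_not_adj hvw hadj] at this
  omega

theorem eq_of_three_commonNeighbors (h : G.IsSRGWith n k ℓ μ) (hℓ : ℓ ≤ 3) (hvw : G.Adj v w)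
    {a b c d : V} (hab : a ≠ b) (hac : a ≠ c) (hbc : b ≠ c) (ha : G.Adj v a ∧ G.Adj w a)
    (hb : G.Adj v b ∧ G.Adj w b) (hc : G.Adj v c ∧ G.Adj w c) (hd : G.Adj v d ∧ G.Adj w d) :
    d = a ∨ d = b ∨ d = c := by
  by_contra! hne
  have := card_le_card_commonNeighbors {d, a, b, c} <| by
    simp only [Finset.mem_insert, Finset.mem_singleton]
    rintro _ (rfl | rfl | rfl | rfl) <;> assumption
  rw [Finset.card_insert_of_notMem (by simp [hne.1, hne.2.1, hne.2.2]),
    Finset.card_eq_three.2 ⟨a, b, c, hab, hac, hbc, rfl⟩, h.of_adj v w hvw] at this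
  omega

end IsSRGWith

variable {n k : ℕ} {x y z u u' t : V}

theorem eq_of_forall_adj_imp_adj_of_maximal_triangle (h : G.IsSRGWith n k 3 2) (hxy : G.Adj x y)
    (hxz : G.Adj x z) (hyz : G.Adj y z) (hmax : ∀ w : V, ¬(G.Adj x w ∧ G.Adj y w ∧ G.Adj z w))
    (hux : ¬G.Adj x u) (huy : ¬G.Adj y u) (huz : ¬G.Adj z u) (hu'x : ¬G.Adj x u')
    (hty : G.Adj y t) (htz : G.Adj z t) (hut : G.Adj u t) (hu't : G.Adj u' t)
    (hx : ∀ w, G.Adj x w → G.Adj u w → G.Adj u' w)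
    (hy : ∀ w, G.Adj y w → G.Adj u w → G.Adj u' w) : u = u' := by
  by_contra hne
  have hxu : x ≠ u := fun e => huy (e ▸ hxy.symm)
  have hyu : y ≠ u := fun e => hux (e ▸ hxy)
  have hyu' : y ≠ u' := fun e => hu'x (e ▸ hxy)
  obtain ⟨a, -, hua, hxa⟩ := h.exists_commonNeighbor_ne le_rfl hxu.symm (hux ·.symm) u
  obtain ⟨b, hba, hub, hxb⟩ := h.exists_commonNeighbor_ne le_rfl hxu.symm (hux ·.symm) a
  have hat : a ≠ t := fun e => hmax t ⟨e ▸ hxa, hty, htz⟩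
  have hbt : b ≠ t := fun e => hmax t ⟨e ▸ hxb, hty, htz⟩
  have hua' := And.intro hua (hx a hxa hua)
  have hub' := And.intro hub (hx b hxb hub)
  have huu' : G.Adj u u' :=
    h.adj_of_three_commonNeighbors (by norm_num) hne hba.symm hat hbt hua' hub' ⟨hut, hu't⟩
  obtain ⟨s, hst, hus, hys⟩ := h.exists_commonNeighbor_ne le_rfl hyu.symm (huy ·.symm) t
  have hxs : G.Adj x s := by
    rcases h.eq_of_three_commonNeighbors le_rfl huu' hba.symm hat hbt hua' hub' ⟨hut, hu't⟩
      ⟨hus, hy s hys hus⟩ with rfl | rfl | rfl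
    · exact hxa
    · exact hxb
    · exact absurd rfl hst
  have hst_adj : G.Adj s t :=
    h.adj_of_three_commonNeighbors (by norm_num) hst hyu hyu' hne ⟨hys.symm, hty.symm⟩
      ⟨hus.symm, hut.symm⟩ ⟨(hy s hys hus).symm, hu't.symm⟩
  have hzs : z ≠ s := fun e => huz (e ▸ hus.symm)
  have hxt : G.Adj x t :=
    h.adj_of_three_commonNeighbors (by norm_num) (fun e => hux (e ▸ hut.symm)) (G.ne_of_adj hyz)
      (G.ne_of_adj hys) hzs ⟨hxy, hty.symm⟩ ⟨hxz, htz.symm⟩ ⟨hxs, hst_adj.symm⟩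
  exact hmax t ⟨hxt, hty, htz⟩

theorem forall_not_adj_of_notMem_union_neighborFinset_sdiff
    (hu : u ∉ ({x, y, z} : Finset V) ∪ (G.neighborFinset x \ {x, y, z} ∪
      G.neighborFinset y \ {x, y, z} ∪ G.neighborFinset z \ {x, y, z})) :
    ∀ p ∈ ({x, y, z} : Finset V), ¬G.Adj p u := by
  intro p hp hpu
  simp only [Finset.mem_union, Finset.mem_sdiff, mem_neighborFinset, not_or, not_and,
    not_not] at hu
  simp only [Finset.mem_insert, Finset.mem_singleton] at hp
  rcases hp with rfl | rfl | rfl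
  · exact hu.1 (hu.2.1.1 hpu)
  · exact hu.1 (hu.2.1.2 hpu)
  · exact hu.1 (hu.2.2 hpu)

end SimpleGraph

open SimpleGraph in
theorem stmt15_general {V : Type} [Fintype V] [DecidableEq V] (G : SimpleGraph V) [DecidableRel G.Adj]
    (h : G.IsSRGWith 85 14 3 2)
    (x y z : V) (hxy : G.Adj x y) (hxz : G.Adj x z) (hyz : G.Adj y z)
    (hmax : ∀ w : V, ¬ (G.Adj x w ∧ G.Adj y w ∧ G.Adj z w)) :
    let Q : Finset V := {x, y, z}
    let Sx := G.neighborFinset x \ Q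
    let Sy := G.neighborFinset y \ Q
    let Sz := G.neighborFinset z \ Q
    let T := Sx ∪ Sy ∪ Sz
    ∀ u u' : V, u ∉ Q ∪ T → u' ∉ Q ∪ T →
      ∀ t ∈ Sy ∩ Sz, G.Adj u t → G.Adj u' t →
        G.neighborFinset u ∩ T = G.neighborFinset u' ∩ T → u = u' := by
  intro Q Sx Sy Sz T u u' hu hu' t ht hut hu't hT
  have hQu := forall_not_adj_of_notMem_union_neighborFinset_sdiff hu
  have hQu' := forall_not_adj_of_notMem_union_neighborFinset_sdiff hu'
  have hT_adj (p : V) (hpT : G.neighborFinset p \ Q ⊆ T) (w : V) (hpw : G.Adj p w)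
      (huw : G.Adj u w) : G.Adj u' w := by
    have hw : w ∈ G.neighborFinset u ∩ T :=
      Finset.mem_inter.2 ⟨(G.mem_neighborFinset u w).2 huw,
        hpT (mem_neighborFinset_sdiff hpw huw hQu)⟩
    exact (G.mem_neighborFinset u' w).1 (Finset.mem_inter.1 (hT ▸ hw)).1
  simp only [Sy, Sz, Finset.mem_inter, Finset.mem_sdiff, mem_neighborFinset] at ht
  exact eq_of_forall_adj_imp_adj_of_maximal_triangle h hxy hxz hyz hmax (hQu x (by simp))
    (hQu y (by simp)) (hQu z (by simp)) (hQu' x (by simp)) ht.1.1 ht.2.1 hut hu't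
    (hT_adj x (fun _ hw => Finset.mem_union_left _ (Finset.mem_union_left _ hw)))
    (hT_adj y (fun _ hw => Finset.mem_union_left _ (Finset.mem_union_right _ hw)))

/-- Let `G = srg(85,14,3,2)` with maximal 3-clique `Q = {x,y,z}` and
`T = S_x ∪ S_y ∪ S_z`. If `u, u'` are vertices outside `Q ∪ T`, both adjacent to the same
vertex `t ∈ S_y ∩ S_z`, and they have the same set of neighbours in `T`, then `u = u'`. -/
theorem stmt15 {V : Type} [Fintype V] [DecidableEq V] (G : SimpleGraph V) [DecidableRel G.Adj]
    (h : G.IsSRGWith 85 14 3 2) (hc : G.Connected)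
    (x y z : V) (hxy : G.Adj x y) (hxz : G.Adj x z) (hyz : G.Adj y z)
    (hmax : ∀ w : V, ¬ (G.Adj x w ∧ G.Adj y w ∧ G.Adj z w)) :
    let Q : Finset V := {x, y, z}
    let Sx := G.neighborFinset x \ Q
    let Sy := G.neighborFinset y \ Q
    let Sz := G.neighborFinset z \ Q
    let T := Sx ∪ Sy ∪ Sz
    ∀ u u' : V, u ∉ Q ∪ T → u' ∉ Q ∪ T →
      ∀ t ∈ Sy ∩ Sz, G.Adj u t → G.Adj u' t →
        G.neighborFinset u ∩ T = G.neighborFinset u' ∩ T → u = u' :=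
  stmt15_general G h x y z hxy hxz hyz hmax
end

section
/- Let G = srg(85,14,3,2), T as above, and let u, u′ be vertices outside Q∪T adjacent to t ∈ S_y∩S_z, with neighbour sets d, d′ in T. If some vertex t_i ∈ T with t_i ∉ neighbours of u′ already has two neighbours in d′ ∩ T and t_i is adjacent to u, then u and u′ are non-adjacent. -/
open Finset

namespace SimpleGraph

variable {V : Type*} [Fintype V] [DecidableEq V] {G : SimpleGraph V} [DecidableRel G.Adj]
  {n k ℓ μ : ℕ}

theorem IsSRGWith.card_neighborFinset_inter_of_not_adj {v w : V} (h : G.IsSRGWith n k ℓ μ)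
    (hne : v ≠ w) (ha : ¬G.Adj v w) :
    #(G.neighborFinset v ∩ G.neighborFinset w) = μ := by
  rw [← h.of_not_adj hne ha, ← Set.toFinset_card]
  congr 1
  ext u
  rw [Set.mem_toFinset]
  simp [commonNeighbors]

theorem IsSRGWith.mem_of_adj_of_adj_of_le_card {v w u : V} {s : Finset V}
    (h : G.IsSRGWith n k ℓ μ) (hne : v ≠ w) (ha : ¬G.Adj v w)
    (hs : μ ≤ #(G.neighborFinset v ∩ (G.neighborFinset w ∩ s)))
    (hvu : G.Adj v u) (hwu : G.Adj w u) : u ∈ s := by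
  have hsub : G.neighborFinset v ∩ (G.neighborFinset w ∩ s) ⊆
      G.neighborFinset v ∩ G.neighborFinset w :=
    inter_subset_inter_left inter_subset_left
  have heq := eq_of_subset_of_card_le hsub
    (h.card_neighborFinset_inter_of_not_adj hne ha ▸ hs)
  have hu : u ∈ G.neighborFinset v ∩ G.neighborFinset w := by simp [hvu, hwu]
  rw [← heq] at hu
  exact (mem_inter.mp (mem_inter.mp hu).2).2

end SimpleGraph

theorem stmt16_general {V : Type} [Fintype V] [DecidableEq V] (G : SimpleGraph V) [DecidableRel G.Adj]
    (h : G.IsSRGWith 85 14 3 2)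
    (x y z : V) :
    let Q : Finset V := {x, y, z}
    let Sx := G.neighborFinset x \ Q
    let Sy := G.neighborFinset y \ Q
    let Sz := G.neighborFinset z \ Q
    let T := Sx ∪ Sy ∪ Sz
    ∀ u u' : V, u ∉ Q ∪ T → u' ∉ Q ∪ T →
      ∀ t ∈ Sy ∩ Sz, G.Adj u t → G.Adj u' t →
        ∀ ti ∈ T, ¬ G.Adj u' ti →
          2 ≤ (G.neighborFinset ti ∩ (G.neighborFinset u' ∩ T)).card →
          G.Adj u ti → ¬ G.Adj u u' := by
  intro Q Sx Sy Sz T u u' hu hu' _ _ _ _ ti hti hnadj hcard huti huu'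
  have hne : ti ≠ u' := by
    rintro rfl
    exact hu' (mem_union_right _ hti)
  exact hu (mem_union_right _
    (h.mem_of_adj_of_adj_of_le_card hne (fun ha => hnadj ha.symm) hcard huti.symm huu'.symm))

/-- Let `G = srg(85,14,3,2)` with maximal 3-clique `Q = {x,y,z}` and
`T = S_x ∪ S_y ∪ S_z`, and let `u, u'` be vertices outside `Q ∪ T` adjacent to a vertex
`t ∈ S_y ∩ S_z`. If some vertex `tᵢ ∈ T` which is not adjacent to `u'` already has two
neighbours among the neighbours of `u'` in `T` (i.e. `tᵢ` is in the halo of `u'`) and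
`tᵢ` is adjacent to `u`, then `u` and `u'` are non-adjacent. -/
theorem stmt16 {V : Type} [Fintype V] [DecidableEq V] (G : SimpleGraph V) [DecidableRel G.Adj]
    (h : G.IsSRGWith 85 14 3 2) (hc : G.Connected)
    (x y z : V) (hxy : G.Adj x y) (hxz : G.Adj x z) (hyz : G.Adj y z)
    (hmax : ∀ w : V, ¬ (G.Adj x w ∧ G.Adj y w ∧ G.Adj z w)) :
    let Q : Finset V := {x, y, z}
    let Sx := G.neighborFinset x \ Q
    let Sy := G.neighborFinset y \ Q
    let Sz := G.neighborFinset z \ Q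
    let T := Sx ∪ Sy ∪ Sz
    ∀ u u' : V, u ∉ Q ∪ T → u' ∉ Q ∪ T →
      ∀ t ∈ Sy ∩ Sz, G.Adj u t → G.Adj u' t →
        ∀ ti ∈ T, ¬ G.Adj u' ti →
          2 ≤ (G.neighborFinset ti ∩ (G.neighborFinset u' ∩ T)).card →
          G.Adj u ti → ¬ G.Adj u u' :=
  stmt16_general G h x y z
end

section
/- Let M be an n×n real symmetric matrix and suppose an LDLᵀ-style Gram–Schmidt process on the bilinear form with Gram matrix M produces orthogonal vectors u₁,...,u_{i} with (u_j,u_j) = D_jj, and D_ii = 0 for some i < n, while M_{ni} ≠ Σ_{j=1}^{i−1} L_{nj} L_{ij} D_{jj}. Then M is not positive semidefinite. -/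
/-!
A positive semidefinite form vanishes on every isotropic vector, so `(u_i, u_i) = 0` forces
`M u_i = 0` and in particular `(e_k, u_i) = 0`. Expanding `u_i = e_i - Σ_{j<i} L_{ij} u_j` gives
`M_{ki} = Σ_{j<i} L_{ij} (e_k, u_j)`, and each `(e_k, u_j)` equals `L_{kj} D_{jj}`: by the
definition of `L_{kj}` when `D_{jj} ≠ 0`, and again by isotropy when `D_{jj} = 0`.
-/

open Matrix

namespace Matrix

variable {ι : Type*} [Fintype ι] [DecidableEq ι]

theorem mulVec_single_sub_sum_apply {α κ : Type*} [CommRing α] (M : Matrix ι ι α)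
    (s : Finset κ) (c : κ → α) (w : κ → ι → α) (i k : ι) :
    (M *ᵥ (Pi.single i 1 - ∑ j ∈ s, c j • w j)) k = M k i - ∑ j ∈ s, c j * (M *ᵥ w j) k := by
  simp [mulVec_sub, mulVec_sum, mulVec_smul]

theorem PosSemidef.mulVec_apply_eq_mul_dotProduct {M : Matrix ι ι ℝ} (hM : M.PosSemidef)
    {v : ι → ℝ} {k : ι} {l : ℝ}
    (hl : l = if v ⬝ᵥ (M *ᵥ v) = 0 then 0
      else ((Pi.single k 1 : ι → ℝ) ⬝ᵥ (M *ᵥ v)) / (v ⬝ᵥ (M *ᵥ v))) :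
    (M *ᵥ v) k = l * (v ⬝ᵥ (M *ᵥ v)) := by
  by_cases hv : v ⬝ᵥ (M *ᵥ v) = 0
  · simp [(hM.dotProduct_mulVec_zero_iff v).mp hv]
  · rw [hl, if_neg hv, div_mul_cancel₀ _ hv, single_dotProduct, one_mul]

end Matrix

theorem stmt18_general {n : ℕ} (M : Matrix (Fin n) (Fin n) ℝ)
    (u : Fin n → Fin n → ℝ) (L : Matrix (Fin n) (Fin n) ℝ)
    (hrec : ∀ k : Fin n, u k = Pi.single k 1 - ∑ j ∈ Finset.Iio k, L k j • u j)
    (hL : ∀ k j : Fin n, j < k →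
      L k j = if u j ⬝ᵥ (M *ᵥ u j) = 0 then 0
        else ((Pi.single k 1 : Fin n → ℝ) ⬝ᵥ (M *ᵥ u j)) / (u j ⬝ᵥ (M *ᵥ u j)))
    (i k : Fin n) (hik : i < k)
    (hD : u i ⬝ᵥ (M *ᵥ u i) = 0)
    (hne : M k i ≠ ∑ j ∈ Finset.Iio i, L k j * L i j * (u j ⬝ᵥ (M *ᵥ u j))) :
    ¬ M.PosSemidef := by
  intro hpsd
  have hki : (M *ᵥ u i) k = 0 := by
    rw [(hpsd.dotProduct_mulVec_zero_iff _).mp hD, Pi.zero_apply]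
  rw [hrec i, mulVec_single_sub_sum_apply, sub_eq_zero] at hki
  refine hne (hki.trans (Finset.sum_congr rfl fun j hj => ?_))
  have hjk : j < k := (Finset.mem_Iio.mp hj).trans hik
  rw [hpsd.mulVec_apply_eq_mul_dotProduct (hL k j hjk)]
  ring

/-- LDLᵀ lemma: let `M` be a symmetric real `n×n` matrix and let `u₁,...,uₙ` and `L` be
produced by the Gram–Schmidt process for the bilinear form `(a,b) = a ⬝ᵥ M *ᵥ b`
(so `u_k = e_k − Σ_{j<k} L_{kj} u_j` with `L_{kj} = (e_k,u_j)/(u_j,u_j)` when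
`(u_j,u_j) ≠ 0` and `L_{kj} = 0` otherwise). If `D_{ii} = (u_i,u_i) = 0` for some
`i < k`, while `M_{ki} ≠ Σ_{j<i} L_{kj} L_{ij} D_{jj}`, then `M` is not positive
semidefinite. -/
theorem stmt18 {n : ℕ} (M : Matrix (Fin n) (Fin n) ℝ) (hM : M.IsSymm)
    (u : Fin n → Fin n → ℝ) (L : Matrix (Fin n) (Fin n) ℝ)
    (hrec : ∀ k : Fin n, u k = Pi.single k 1 - ∑ j ∈ Finset.Iio k, L k j • u j)
    (hL : ∀ k j : Fin n, j < k →
      L k j = if u j ⬝ᵥ (M *ᵥ u j) = 0 then 0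
        else ((Pi.single k 1 : Fin n → ℝ) ⬝ᵥ (M *ᵥ u j)) / (u j ⬝ᵥ (M *ᵥ u j)))
    (i k : Fin n) (hik : i < k)
    (hD : u i ⬝ᵥ (M *ᵥ u i) = 0)
    (hne : M k i ≠ ∑ j ∈ Finset.Iio i, L k j * L i j * (u j ⬝ᵥ (M *ᵥ u j))) :
    ¬ M.PosSemidef :=
  stmt18_general M u L hrec hL i k hik hD hne
end

section
/- Let M be an n×n positive semidefinite Gram matrix of a spanning set t₁,...,t_n of a subspace W of a real inner product space, let u₁,...,u_n be the Gram–Schmidt orthogonal basis of ℝⁿ with respect to the form given by M, with D_ii = (u_i,u_i), and set N = {i : D_ii ≠ 0} and P = Σ_{i∈N} (1/D_ii) u_iᵀ u_i. If r ∈ ℝⁿ is defined by r_i = u · t_i for some vector u, then the vector w = Σ_i p_i t_i with p = rP is the orthogonal projection of u onto W. -/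
/-!
Push the spanning set forward: with `ψ a = ∑ aᵢ tᵢ`, the form `a M bᵀ` is `⟪ψ a, ψ b⟫`, so
the vectors `vₖ = ψ uₖ` satisfy exactly the Gram–Schmidt recursion of `t₁, …, tₙ` in `E`
(the convention `L k j = 0` when `D_jj = 0` matching `a / 0 = 0`). Hence the `vₖ` are
pairwise orthogonal and span `W`, and `w = ψ (r P) = ∑_{vₖ ≠ 0} ⟪vₖ, x⟫ / ‖vₖ‖² • vₖ`, whose
difference with `x` is orthogonal to every `vₖ`.
-/

open Matrix RealInnerProductSpace

open Finset Submodule InnerProductSpace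

section GramSchmidt

variable {𝕜 E ι : Type*} [RCLike 𝕜] [NormedAddCommGroup E] [InnerProductSpace 𝕜 E]

theorem eq_gramSchmidt_of_eq_sub_sum [LinearOrder ι] [LocallyFiniteOrderBot ι] [WellFoundedLT ι]
    {f v : ι → E}
    (hv : ∀ n, v n = f n - ∑ i ∈ Iio n, (inner 𝕜 (v i) (f n) / (‖v i‖ : 𝕜) ^ 2) • v i) :
    v = gramSchmidt 𝕜 f := by
  funext n
  induction n using WellFoundedLT.induction with
  | _ n ih =>
    rw [hv n, gramSchmidt_def 𝕜 f n]
    refine congrArg _ (sum_congr rfl fun i hi => ?_)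
    rw [ih i (mem_Iio.mp hi), starProjection_singleton, RCLike.ofReal_pow]

theorem sub_sum_mem_orthogonal_span [Fintype ι] {v : ι → E}
    (hv : Pairwise fun i j => inner 𝕜 (v i) (v j) = 0) (x : E) :
    x - ∑ i, (inner 𝕜 (v i) x / (‖v i‖ : 𝕜) ^ 2) • v i ∈ (span 𝕜 (Set.range v))ᗮ := by
  rw [← span_singleton_le_iff_mem, ← isOrtho_iff_le, isOrtho_comm, isOrtho_span]
  rintro _ ⟨k, rfl⟩ _ rfl
  rcases eq_or_ne (v k) 0 with hk | hk
  · simp [hk]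
  have hsum : ∑ i, inner 𝕜 (v k) ((inner 𝕜 (v i) x / (‖v i‖ : 𝕜) ^ 2) • v i) =
      inner 𝕜 (v k) x := by
    rw [sum_eq_single k (fun i _ hik => by rw [inner_smul_right, hv hik.symm, mul_zero])
      (by simp), inner_smul_right, inner_self_eq_norm_sq_to_K, div_mul_cancel₀]
    simpa using hk
  rw [inner_sub_right, inner_sum, hsum, sub_self]

end GramSchmidt

theorem Matrix.vecMul_sum_inv_smul_vecMulVec_self {α ι n : Type*} [Field α] [DecidableEq α]
    [Fintype ι] [Fintype n] (r : n → α) (d : ι → α) (u : ι → n → α) :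
    r ᵥ* ∑ i with d i ≠ 0, (d i)⁻¹ • vecMulVec (u i) (u i) = ∑ i, ((r ⬝ᵥ u i) / d i) • u i := by
  rw [vecMul_sum, sum_filter_of_ne]
  · simp only [vecMul_smul, vecMul_vecMulVec, smul_smul, div_eq_inv_mul]
  · intro i _ hi hd
    rw [hd, _root_.inv_zero, zero_smul, vecMul_zero] at hi
    exact hi rfl

section Real

variable {E ι : Type*} [NormedAddCommGroup E] [InnerProductSpace ℝ E] [Fintype ι] (t : ι → E)

theorem Matrix.dotProduct_gram_mulVec (a b : ι → ℝ) :
    a ⬝ᵥ gram ℝ t *ᵥ b = ⟪Fintype.linearCombination ℝ t a, Fintype.linearCombination ℝ t b⟫ := by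
  simpa [Fintype.linearCombination_apply] using star_dotProduct_gram_mulVec t a b

theorem inner_fintypeLinearCombination_right (x : E) (a : ι → ℝ) :
    ⟪x, Fintype.linearCombination ℝ t a⟫ = (fun i => ⟪x, t i⟫) ⬝ᵥ a := by
  simp only [Fintype.linearCombination_apply, inner_sum, real_inner_smul_right, dotProduct,
    mul_comm]

end Real

/-- Projection matrix lemma: let `M` be the (positive semidefinite) Gram matrix of a
spanning set `t₁,...,tₙ` of a subspace `W` of a real inner product space, let
`u₁,...,uₙ` be the Gram–Schmidt orthogonal basis of `ℝⁿ` with respect to the bilinear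
form given by `M` (with `D_{ii} = (u_i,u_i)`), let `N = {i : D_{ii} ≠ 0}` and
`P = Σ_{i∈N} D_{ii}⁻¹ uᵢᵀ uᵢ`. If `r ∈ ℝⁿ` is defined by `rᵢ = x · tᵢ` for a vector
`x`, then `w = Σᵢ pᵢ tᵢ` with `p = rP` is the orthogonal projection of `x` onto `W`,
i.e. `w ∈ W` and `x − w` is orthogonal to `W`. -/
theorem stmt19 {E : Type} [NormedAddCommGroup E] [InnerProductSpace ℝ E]
    {n : ℕ} (t : Fin n → E) (M : Matrix (Fin n) (Fin n) ℝ)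
    (hMGram : ∀ i j, M i j = ⟪t i, t j⟫)
    (u : Fin n → Fin n → ℝ) (L : Matrix (Fin n) (Fin n) ℝ)
    (hrec : ∀ k : Fin n, u k = Pi.single k 1 - ∑ j ∈ Finset.Iio k, L k j • u j)
    (hL : ∀ k j : Fin n, j < k →
      L k j = if u j ⬝ᵥ (M *ᵥ u j) = 0 then 0
        else ((Pi.single k 1 : Fin n → ℝ) ⬝ᵥ (M *ᵥ u j)) / (u j ⬝ᵥ (M *ᵥ u j)))
    (x : E) (r : Fin n → ℝ) (hr : ∀ i, r i = ⟪x, t i⟫)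
    (P : Matrix (Fin n) (Fin n) ℝ)
    (hP : P = ∑ i ∈ Finset.univ.filter (fun i : Fin n => u i ⬝ᵥ (M *ᵥ u i) ≠ 0),
      (u i ⬝ᵥ (M *ᵥ u i))⁻¹ • Matrix.of (fun a b => u i a * u i b))
    (p : Fin n → ℝ) (hp : p = Matrix.vecMul r P)
    (w : E) (hw : w = ∑ i, p i • t i) :
    w ∈ Submodule.span ℝ (Set.range t) ∧
      ∀ v ∈ Submodule.span ℝ (Set.range t), ⟪x - w, v⟫ = 0 := by
  set ψ := Fintype.linearCombination ℝ t
  set v : Fin n → E := fun k => ψ (u k)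
  have hform : ∀ a b, a ⬝ᵥ M *ᵥ b = ⟪ψ a, ψ b⟫ := Matrix.ext hMGram ▸ dotProduct_gram_mulVec t
  have hD : ∀ k, u k ⬝ᵥ M *ᵥ u k = ‖v k‖ ^ 2 := fun k =>
    (hform _ _).trans (real_inner_self_eq_norm_sq _)
  have hψ_single : ∀ k, ψ (Pi.single k 1) = t k := by simp [ψ]
  have hv : v = gramSchmidt ℝ t := by
    refine eq_gramSchmidt_of_eq_sub_sum fun k => ?_
    have hLk : ∀ j < k, L k j = ⟪v j, t k⟫ / ‖v j‖ ^ 2 := by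
      intro j hj
      rw [hL k j hj, hD, hform, hψ_single]
      split_ifs with h
      · simp [h]
      · exact congrArg (· / _) (real_inner_comm _ _)
    simp only [v, hrec k, map_sub, map_sum, map_smul]
    refine congrArg₂ (· - ·) (hψ_single k) (sum_congr rfl fun j hj => ?_)
    rw [hLk j (mem_Iio.mp hj)]
    rfl
  have hw' : w = ∑ i, (⟪v i, x⟫ / ‖v i‖ ^ 2) • v i := by
    rw [hw, ← Fintype.linearCombination_apply, hp, hP]
    simp only [← vecMulVec.eq_1]
    rw [vecMul_sum_inv_smul_vecMulVec_self, map_sum]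
    refine sum_congr rfl fun i _ => ?_
    rw [map_smul, hD, funext hr, ← inner_fintypeLinearCombination_right, real_inner_comm]
  rw [hv] at hw'
  refine ⟨(mem_span_range_iff_exists_fun ℝ).mpr ⟨p, hw.symm⟩, fun y hy => ?_⟩
  rw [← span_gramSchmidt ℝ t] at hy
  exact inner_left_of_mem_orthogonal hy
    (hw' ▸ sub_sum_mem_orthogonal_span (gramSchmidt_pairwise_orthogonal ℝ t) x)
end
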